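/- (Soundness and completeness of IS4 for birelational semantics) A formula A is a theorem of IS4 if and only if A is valid in every birelational frame ⟨W,R,≤⟩ in which R is reflexive and transitive, i.e., A is forced at every world of ⟨W,R,≤,V⟩ for every monotone valuation V. -/

import Mathlib

/-- Formulas of intuitionistic modal logic, built from atomic propositions
`a ∈ ℕ` by `A ::= ⊥ | a | (A∧A) | (A∨A) | (A⊃A) | □A | ◇A`. -/
inductive Formula : Type
  | bot  : Formula
  | atom : ℕ → Formula
  | and  : Formula → Formula → Formula
  | or   : Formula → Formula → Formula
  | imp  : Formula → Formula → Formula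
  | box  : Formula → Formula
  | dia  : Formula → Formula
  deriving DecidableEq
/-- The Hilbert system for intuitionistic modal logic IS4: theorems are generated
by modus ponens and necessitation from (the axiom schemes of) intuitionistic
propositional logic together with the axiom schemes k1–k5, 4 and t. -/
inductive IS4 : Formula → Prop
  -- rules
  | mp {A B} : IS4 (Formula.imp A B) → IS4 A → IS4 B
  | nec {A} : IS4 A → IS4 (Formula.box A)
  -- axiom schemes of intuitionistic propositional logic
  | ipc1 (A B) : IS4 (Formula.imp A (Formula.imp B A))
  | ipc2 (A B C) : IS4 (Formula.imp (Formula.imp A (Formula.imp B C))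
      (Formula.imp (Formula.imp A B) (Formula.imp A C)))
  | ipc3 (A B) : IS4 (Formula.imp A (Formula.imp B (Formula.and A B)))
  | ipc4 (A B) : IS4 (Formula.imp (Formula.and A B) A)
  | ipc5 (A B) : IS4 (Formula.imp (Formula.and A B) B)
  | ipc6 (A B) : IS4 (Formula.imp A (Formula.or A B))
  | ipc7 (A B) : IS4 (Formula.imp B (Formula.or A B))
  | ipc8 (A B C) : IS4 (Formula.imp (Formula.imp A C)
      (Formula.imp (Formula.imp B C) (Formula.imp (Formula.or A B) C)))
  | ipc9 (A) : IS4 (Formula.imp Formula.bot A)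
  -- k-axioms
  | k1 (A B) : IS4 (Formula.imp (Formula.box (Formula.imp A B))
      (Formula.imp (Formula.box A) (Formula.box B)))
  | k2 (A B) : IS4 (Formula.imp (Formula.box (Formula.imp A B))
      (Formula.imp (Formula.dia A) (Formula.dia B)))
  | k3 (A B) : IS4 (Formula.imp (Formula.dia (Formula.or A B))
      (Formula.or (Formula.dia A) (Formula.dia B)))
  | k4 (A B) : IS4 (Formula.imp (Formula.imp (Formula.dia A) (Formula.box B))
      (Formula.box (Formula.imp A B)))
  | k5 : IS4 (Formula.imp (Formula.dia Formula.bot) Formula.bot)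
  -- 4 and t axioms
  | ax4 (A) : IS4 (Formula.and
      (Formula.imp (Formula.dia (Formula.dia A)) (Formula.dia A))
      (Formula.imp (Formula.box A) (Formula.box (Formula.box A))))
  | axt (A) : IS4 (Formula.and
      (Formula.imp A (Formula.dia A))
      (Formula.imp (Formula.box A) A))
/-- A birelational model: a nonempty set of worlds `W` equipped with a preorder `≤`,
an accessibility relation `R` satisfying the frame conditions (F1) and (F2),
and a monotone valuation. -/
structure BModel : Type 1 where
  W : Type
  nonempty : Nonempty W
  le : W → W → Prop
  rel : W → W → Prop
  le_refl : ∀ w, le w w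
  le_trans : ∀ u v w, le u v → le v w → le u w
  F1 : ∀ x y z, rel x y → le y z → ∃ u, le x u ∧ rel u z
  F2 : ∀ x y z, le x z → rel x y → ∃ u, rel z u ∧ le y u
  val : W → ℕ → Prop
  mono : ∀ w w', le w w' → ∀ a, val w a → val w' a

/-- The forcing relation `M, w ⊩ A` of a birelational model. -/
def BModel.force (M : BModel) : M.W → Formula → Prop
  | _, Formula.bot => False
  | w, Formula.atom a => M.val w a
  | w, Formula.and A B => M.force w A ∧ M.force w B
  | w, Formula.or A B => M.force w A ∨ M.force w B
  | w, Formula.imp A B => ∀ w', M.le w w' → M.force w' A → M.force w' B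
  | w, Formula.box A => ∀ w' u, M.le w w' → M.rel w' u → M.force u A
  | w, Formula.dia A => ∃ u, M.rel w u ∧ M.force u A

namespace IMLAux

open Formula

/-- Provability from a set of hypotheses. -/
inductive Prov (Γ : Set Formula) : Formula → Prop
  | ax {A : Formula} : A ∈ Γ → Prov Γ A
  | thm {A : Formula} : IS4 A → Prov Γ A
  | mp {A B : Formula} : Prov Γ (Formula.imp A B) → Prov Γ A → Prov Γ B

theorem Prov.mono {Γ Γ' : Set Formula} (h : Γ ⊆ Γ') {A : Formula} (hA : Prov Γ A) : Prov Γ' A := by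
  induction hA with
  | ax h' => exact .ax (h h')
  | thm h' => exact .thm h'
  | mp _ _ ih1 ih2 => exact .mp ih1 ih2

theorem IS4.idI (A : Formula) : IS4 (A.imp A) :=
  ((IS4.ipc2 A (A.imp A) A).mp (IS4.ipc1 A (A.imp A))).mp (IS4.ipc1 A A)

theorem Prov.ded {Γ : Set Formula} {A B : Formula} (h : Prov (insert A Γ) B) : Prov Γ (A.imp B) := by
  induction h with
  | @ax C h' =>
    rcases h' with h' | h'
    · cases h'; exact .thm (IS4.idI _)
    · exact .mp (.thm (IS4.ipc1 C A)) (.ax h')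
  | @thm C h' => exact .mp (.thm (IS4.ipc1 C A)) (.thm h')
  | @mp C D _ _ ih1 ih2 => exact .mp (.mp (.thm (IS4.ipc2 A C D)) ih1) ih2

theorem Prov.ded' {Γ : Set Formula} {A B : Formula} (h : Prov Γ (A.imp B)) : Prov (insert A Γ) B :=
  .mp (h.mono (Set.subset_insert _ _)) (.ax (Set.mem_insert _ _))

theorem Prov.cut {Γ Δ : Set Formula} {A : Formula} (h : Prov Δ A) (h' : ∀ B ∈ Δ, Prov Γ B) :
    Prov Γ A := by
  induction h with
  | ax hm => exact h' _ hm
  | thm ht => exact .thm ht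
  | mp _ _ ih1 ih2 => exact ih1.mp ih2

theorem IS4_of_prov {A : Formula} (h : Prov ∅ A) : IS4 A := by
  induction h with
  | ax hm => exact absurd hm (Set.notMem_empty _)
  | thm ht => exact ht
  | mp _ _ ih1 ih2 => exact ih1.mp ih2

/-- derive `IS4 (A.imp B)` from a proof of B with hypothesis A -/
theorem impI {A B : Formula} (h : Prov ({A} : Set Formula) B) : IS4 (A.imp B) := by
  apply IS4_of_prov
  exact Prov.ded (by simpa using h)

theorem impTrans {A B C : Formula} (h1 : IS4 (A.imp B)) (h2 : IS4 (B.imp C)) : IS4 (A.imp C) :=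
  impI (.mp (.thm h2) (.mp (.thm h1) (.ax rfl)))

theorem impAnd {X A B : Formula} (h1 : IS4 (X.imp A)) (h2 : IS4 (X.imp B)) : IS4 (X.imp (A.and B)) :=
  impI (.mp (.mp (.thm (IS4.ipc3 A B)) (.mp (.thm h1) (.ax rfl))) (.mp (.thm h2) (.ax rfl)))

theorem orElim {Γ : Set Formula} {A B C : Formula} (h : Prov Γ (A.or B))
    (h1 : Prov (insert A Γ) C) (h2 : Prov (insert B Γ) C) : Prov Γ C :=
  .mp (.mp (.mp (.thm (IS4.ipc8 A B C)) h1.ded) h2.ded) h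

def Top : Formula := Formula.imp Formula.bot Formula.bot

theorem topI : IS4 Top := IS4.idI _

/-- conjunction of a list of formulas -/
def conj : List Formula → Formula
  | [] => Top
  | B :: S => Formula.and B (conj S)

theorem conjMem {S : List Formula} {B} (h : B ∈ S) : IS4 ((conj S).imp B) := by
  induction S with
  | nil => simp at h
  | cons C S ih =>
    rcases List.mem_cons.1 h with h | h
    · exact h ▸ IS4.ipc4 _ _
    · exact impTrans (IS4.ipc5 _ _) (ih h)

theorem impConj {X : Formula} {S : List Formula} (h : ∀ B ∈ S, IS4 (X.imp B)) :
    IS4 (X.imp (conj S)) := by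
  induction S with
  | nil => exact (IS4.ipc1 Top X).mp topI
  | cons C S ih =>
    exact impAnd (h _ (List.mem_cons_self)) (ih fun B hB => h _ (List.mem_cons_of_mem _ hB))

theorem conjMono {S S' : List Formula} (h : ∀ B ∈ S, B ∈ S') :
    IS4 ((conj S').imp (conj S)) := impConj fun B hB => conjMem (h B hB)

theorem prov_of_conj {Γ : Set Formula} {S : List Formula} {A : Formula}
    (h : IS4 ((conj S).imp A)) (hS : ∀ B ∈ S, B ∈ Γ) : Prov Γ A := by
  have hc : Prov Γ (conj S) := by
    clear h
    induction S with
    | nil => exact .thm topI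
    | cons C S ih =>
      exact .mp (.mp (.thm (IS4.ipc3 _ _)) (.ax (hS _ (List.mem_cons_self))))
        (ih fun B hB => hS _ (List.mem_cons_of_mem _ hB))
  exact .mp (.thm h) hc

theorem exists_conj {Γ : Set Formula} {A : Formula} (h : Prov Γ A) :
    ∃ S : List Formula, (∀ B ∈ S, B ∈ Γ) ∧ IS4 ((conj S).imp A) := by
  induction h with
  | @ax C hm => exact ⟨[C], by simpa using hm, IS4.ipc4 _ _⟩
  | @thm C ht => exact ⟨[], by simp, (IS4.ipc1 C Top).mp ht⟩
  | @mp C D _ _ ih1 ih2 =>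
    obtain ⟨S1, hS1, h1⟩ := ih1
    obtain ⟨S2, hS2, h2⟩ := ih2
    refine ⟨S1 ++ S2, ?_, ?_⟩
    · intro B hB; rcases List.mem_append.1 hB with hB | hB
      · exact hS1 _ hB
      · exact hS2 _ hB
    · have e1 : IS4 ((conj (S1 ++ S2)).imp (C.imp D)) :=
        impTrans (conjMono fun B hB => List.mem_append.2 (Or.inl hB)) h1
      have e2 : IS4 ((conj (S1 ++ S2)).imp C) :=
        impTrans (conjMono fun B hB => List.mem_append.2 (Or.inr hB)) h2
      exact impI (.mp (.mp (.thm e1) (.ax rfl)) (.mp (.thm e2) (.ax rfl)))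

theorem boxMono {A B : Formula} (h : IS4 (A.imp B)) : IS4 ((Formula.box A).imp (Formula.box B)) :=
  (IS4.k1 A B).mp h.nec

theorem diaMono {A B : Formula} (h : IS4 (A.imp B)) : IS4 ((Formula.dia A).imp (Formula.dia B)) :=
  (IS4.k2 A B).mp h.nec

/-- from `⊢ B∧X ⊃ Y` get `⊢ □B ⊃ (◇X ⊃ ◇Y)` -/
theorem boxDia {B X Y : Formula} (h : IS4 ((B.and X).imp Y)) :
    IS4 ((Formula.box B).imp ((Formula.dia X).imp (Formula.dia Y))) := by
  have h1 : IS4 (B.imp (X.imp Y)) :=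
    impI (.ded (.mp (.thm h) (.mp (.mp (.thm (IS4.ipc3 B X))
      (.ax (Set.mem_insert_of_mem _ rfl))) (.ax (Set.mem_insert _ _)))))
  exact impTrans (boxMono h1) (IS4.k2 X Y)

end IMLAux
namespace IMLAux

/-- An injective code for formulas. -/
def enc : Formula → ℕ
  | Formula.bot => Nat.pair 0 0
  | Formula.atom a => Nat.pair 1 a
  | Formula.and A B => Nat.pair 2 (Nat.pair (enc A) (enc B))
  | Formula.or A B => Nat.pair 3 (Nat.pair (enc A) (enc B))
  | Formula.imp A B => Nat.pair 4 (Nat.pair (enc A) (enc B))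
  | Formula.box A => Nat.pair 5 (enc A)
  | Formula.dia A => Nat.pair 6 (enc A)

theorem enc_inj : Function.Injective enc := by
  intro x
  induction x with
  | bot => intro y h; cases y <;> simp [enc, Nat.pair_eq_pair] at h ⊢
  | atom a => intro y h; cases y <;> simp [enc, Nat.pair_eq_pair] at h ⊢; exact h
  | and A B ihA ihB =>
    intro y h; cases y <;> simp [enc, Nat.pair_eq_pair] at h
    obtain ⟨h1, h2⟩ := h; rw [ihA h1, ihB h2]
  | or A B ihA ihB =>
    intro y h; cases y <;> simp [enc, Nat.pair_eq_pair] at h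
    obtain ⟨h1, h2⟩ := h; rw [ihA h1, ihB h2]
  | imp A B ihA ihB =>
    intro y h; cases y <;> simp [enc, Nat.pair_eq_pair] at h
    obtain ⟨h1, h2⟩ := h; rw [ihA h1, ihB h2]
  | box A ihA =>
    intro y h; cases y <;> simp [enc, Nat.pair_eq_pair] at h
    rw [ihA h]
  | dia A ihA =>
    intro y h; cases y <;> simp [enc, Nat.pair_eq_pair] at h
    rw [ihA h]

instance : Nonempty Formula := ⟨Formula.bot⟩

noncomputable def fenum : ℕ → Formula := Function.invFun enc

theorem fenum_surj : Function.Surjective fenum :=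
  Function.invFun_surjective enc_inj

/-- An enumeration of formulas in which every formula appears infinitely often. -/
noncomputable def en (n : ℕ) : Formula := fenum n.unpair.1

theorem en_ge (A : Formula) (n : ℕ) : ∃ m, n ≤ m ∧ en m = A := by
  obtain ⟨a, ha⟩ := fenum_surj A
  exact ⟨Nat.pair a n, Nat.right_le_pair a n, by simp [en, Nat.unpair_pair, ha]⟩

/-- Prime theories. -/
structure IsPrime (Γ : Set Formula) : Prop where
  closed : ∀ {A}, Prov Γ A → A ∈ Γ
  cons : Formula.bot ∉ Γ
  prime : ∀ {A B}, Formula.or A B ∈ Γ → A ∈ Γ ∨ B ∈ Γ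

theorem IsPrime.diaMemMono {Γ : Set Formula} (hΓ : IsPrime Γ) {X Y : Formula}
    (h : IS4 (X.imp Y)) (hd : Formula.dia X ∈ Γ) : Formula.dia Y ∈ Γ :=
  hΓ.closed (.mp (.thm (diaMono h)) (.ax hd))

theorem IsPrime.diaSplit {Γ : Set Formula} (hΓ : IsPrime Γ) {X Y Z : Formula}
    (h : IS4 (X.imp (Y.or Z))) (hd : Formula.dia X ∈ Γ) :
    Formula.dia Y ∈ Γ ∨ Formula.dia Z ∈ Γ := by
  have h1 : Formula.dia (Y.or Z) ∈ Γ := hΓ.diaMemMono h hd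
  exact hΓ.prime (hΓ.closed (.mp (.thm (IS4.k3 Y Z)) (.ax h1)))

theorem IsPrime.diaBoxMem {Γ : Set Formula} (hΓ : IsPrime Γ) {B X Y : Formula}
    (h : IS4 ((B.and X).imp Y)) (hb : Formula.box B ∈ Γ) (hx : Formula.dia X ∈ Γ) :
    Formula.dia Y ∈ Γ :=
  hΓ.closed (.mp (.mp (.thm (boxDia h)) (.ax hb)) (.ax hx))

/-- Iterating a step function over the enumeration of formulas. -/
noncomputable def chain {α : Type} (step : α → Formula → α) (init : α) : ℕ → α
  | 0 => init
  | n + 1 => step (chain step init n) (en n)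

/-- The theory generated by a chain of sets of hypotheses. -/
def Th (c : ℕ → Set Formula) : Set Formula := {A | ∃ n, Prov (c n) A}

theorem Th_spec {c : ℕ → Set Formula} (hmono : ∀ n, c n ⊆ c (n + 1)) {A : Formula}
    (h : Prov (Th c) A) : ∃ n, Prov (c n) A := by
  have hle : ∀ {n m}, n ≤ m → c n ⊆ c m := by
    intro n m h
    induction h with
    | refl => exact fun _ h => h
    | step _ ih => exact fun x hx => hmono _ (ih hx)
  induction h with
  | ax hm => exact hm
  | thm ht => exact ⟨0, .thm ht⟩
  | mp _ _ ih1 ih2 =>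
    obtain ⟨n1, h1⟩ := ih1
    obtain ⟨n2, h2⟩ := ih2
    exact ⟨max n1 n2, .mp (h1.mono (hle (le_max_left _ _)))
      (h2.mono (hle (le_max_right _ _)))⟩

/-- The theory generated by a chain of finite lists. -/
def ThL (c : ℕ → List Formula) : Set Formula := {A | ∃ n, IS4 ((conj (c n)).imp A)}

theorem ThL_spec {c : ℕ → List Formula} (hmono : ∀ n, ∀ B ∈ c n, B ∈ c (n + 1))
    {A : Formula} (h : Prov (ThL c) A) : ∃ n, IS4 ((conj (c n)).imp A) := by
  have hle : ∀ {n m}, n ≤ m → ∀ B ∈ c n, B ∈ c m := by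
    intro n m h
    induction h with
    | refl => exact fun _ h => h
    | step _ ih => exact fun x hx => hmono _ _ (ih _ hx)
  induction h with
  | ax hm => exact hm
  | thm ht => exact ⟨0, (IS4.ipc1 _ _).mp ht⟩
  | mp _ _ ih1 ih2 =>
    obtain ⟨n1, h1⟩ := ih1
    obtain ⟨n2, h2⟩ := ih2
    refine ⟨max n1 n2, ?_⟩
    have e1 := impTrans (conjMono (hle (le_max_left n1 n2))) h1
    have e2 := impTrans (conjMono (hle (le_max_right n1 n2))) h2
    exact impI (.mp (.mp (.thm e1) (.ax rfl)) (.mp (.thm e2) (.ax rfl)))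

end IMLAux
namespace IMLAux

theorem cmono {c : ℕ → Set Formula} (h : ∀ n, c n ⊆ c (n + 1)) {n m : ℕ} (hnm : n ≤ m) :
    c n ⊆ c m := by
  induction hnm with
  | refl => exact fun _ h => h
  | step _ ih => exact fun x hx => h _ (ih hx)

theorem cmonoL {c : ℕ → List Formula} (h : ∀ n, ∀ B ∈ c n, B ∈ c (n + 1)) {n m : ℕ}
    (hnm : n ≤ m) : ∀ B ∈ c n, B ∈ c m := by
  induction hnm with
  | refl => exact fun _ h => h
  | step _ ih => exact fun x hx => h _ _ (ih _ hx)

open Classical in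
/-- One saturation step for the Lindenbaum construction avoiding `G`. -/
noncomputable def lstep (G : Formula) (X : Set Formula) : Formula → Set Formula
  | Formula.or C C' =>
    if Prov X (C.or C') then
      (if ¬ Prov (insert C X) G then insert C X else insert C' X)
    else X
  | _ => X

theorem lstep_sub (G : Formula) (X : Set Formula) (D : Formula) : X ⊆ lstep G X D := by
  cases D <;> simp only [lstep] <;> try exact fun _ h => h
  split_ifs <;> first | exact Set.subset_insert _ _ | exact fun _ h => h

theorem lstep_inv {G : Formula} {X : Set Formula} (hX : ¬ Prov X G) (D : Formula) :
    ¬ Prov (lstep G X D) G := by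
  cases D <;> simp only [lstep] <;> try exact hX
  case or C C' =>
    by_cases h1 : Prov X (C.or C')
    · rw [if_pos h1]
      by_cases h2 : Prov (insert C X) G
      · rw [if_neg (not_not_intro h2)]
        intro h3
        exact hX (orElim h1 h2 h3)
      · rw [if_pos h2]
        exact h2
    · rw [if_neg h1]
      exact hX

theorem lstep_or {G : Formula} {X : Set Formula} {C C' : Formula}
    (h : Prov X (C.or C')) : C ∈ lstep G X (C.or C') ∨ C' ∈ lstep G X (C.or C') := by
  simp only [lstep, if_pos h]
  by_cases h2 : Prov (insert C X) G
  · rw [if_neg (not_not_intro h2)]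
    exact Or.inr (Set.mem_insert _ _)
  · rw [if_pos h2]
    exact Or.inl (Set.mem_insert _ _)

theorem lindenbaum {Γ : Set Formula} {G : Formula} (h : ¬ Prov Γ G) :
    ∃ Δ, IsPrime Δ ∧ Γ ⊆ Δ ∧ G ∉ Δ := by
  set c : ℕ → Set Formula := chain (lstep G) Γ with hc
  have hmono : ∀ n, c n ⊆ c (n + 1) := fun n => lstep_sub G (c n) (en n)
  have hinv : ∀ n, ¬ Prov (c n) G := by
    intro n; induction n with
    | zero => exact h
    | succ n ih => exact lstep_inv ih (en n)
  refine ⟨Th c, ⟨?_, ?_, ?_⟩, ?_, ?_⟩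
  · exact fun hA => Th_spec hmono hA
  · rintro ⟨n, hn⟩
    exact hinv n ((Prov.thm (IS4.ipc9 G)).mp hn)
  · rintro A B ⟨n, hn⟩
    obtain ⟨m, hm, hem⟩ := en_ge (A.or B) n
    have hprov : Prov (c m) (A.or B) := hn.mono (cmono hmono hm)
    rcases lstep_or (G := G) hprov with hmem | hmem
    · exact Or.inl ⟨m + 1, .ax (show A ∈ lstep G (c m) (en m) by rw [hem]; exact hmem)⟩
    · exact Or.inr ⟨m + 1, .ax (show B ∈ lstep G (c m) (en m) by rw [hem]; exact hmem)⟩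
  · exact fun A hA => ⟨0, .ax hA⟩
  · rintro ⟨n, hn⟩
    exact hinv n hn

end IMLAux
namespace IMLAux

theorem paI {Γ : Set Formula} {A B : Formula} (a : Prov Γ A) (b : Prov Γ B) :
    Prov Γ (A.and B) := .mp (.mp (.thm (IS4.ipc3 _ _)) a) b
theorem paL {Γ : Set Formula} {A B : Formula} (a : Prov Γ (A.and B)) : Prov Γ A :=
  .mp (.thm (IS4.ipc4 _ _)) a
theorem paR {Γ : Set Formula} {A B : Formula} (a : Prov Γ (A.and B)) : Prov Γ B :=
  .mp (.thm (IS4.ipc5 _ _)) a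
theorem poL {Γ : Set Formula} {A B : Formula} (a : Prov Γ A) : Prov Γ (A.or B) :=
  .mp (.thm (IS4.ipc6 _ _)) a
theorem poR {Γ : Set Formula} {A B : Formula} (a : Prov Γ B) : Prov Γ (A.or B) :=
  .mp (.thm (IS4.ipc7 _ _)) a
theorem pw {Γ : Set Formula} {A B : Formula} (a : Prov Γ A) : Prov (insert B Γ) A :=
  a.mono (Set.subset_insert _ _)
theorem pax0 {Γ : Set Formula} {A : Formula} : Prov (insert A Γ) A :=
  .ax (Set.mem_insert _ _)

theorem orSplitConj {σ C C' D : Formula} (h : IS4 (σ.imp (C.or C'))) :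
    IS4 ((σ.and D).imp (((C.and σ).and D).or ((C'.and σ).and D))) := by
  apply impI
  have h1 : Prov ({σ.and D} : Set Formula) σ := paL (.ax rfl)
  have h2 : Prov ({σ.and D} : Set Formula) D := paR (.ax rfl)
  exact orElim (.mp (.thm h) h1)
    (poL (paI (paI pax0 (pw h1)) (pw h2)))
    (poR (paI (paI pax0 (pw h1)) (pw h2)))

theorem rearr1 {D σ D' : Formula} : IS4 ((D.and (σ.and D')).imp ((D.and σ).and D')) :=
  impI (paI (paI (paL (.ax rfl)) (paL (paR (.ax rfl)))) (paR (paR (.ax rfl))))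

theorem rearr2 {σ D D' : Formula} : IS4 ((σ.and (D.and D')).imp ((D.and σ).and D')) :=
  impI (paI (paI (paL (paR (.ax rfl))) (paL (.ax rfl))) (paR (paR (.ax rfl))))

/-- The invariant of the saturation construction. -/
def SInv (Γ Δ₀ : Set Formula) (S : List Formula) : Prop :=
  ∀ D ∈ Δ₀, Formula.dia ((conj S).and D) ∈ Γ

open Classical in
noncomputable def sstep1 (Γ Δ₀ : Set Formula) (S : List Formula) : Formula → List Formula
  | Formula.or C C' =>
    if IS4 ((conj S).imp (C.or C')) then
      (if SInv Γ Δ₀ (C :: S) then C :: S else C' :: S)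
    else S
  | _ => S

open Classical in
noncomputable def sstep2 (Γ : Set Formula) (S : List Formula) (D : Formula) : List Formula :=
  if Formula.box D ∈ Γ then D :: S else S

open Classical in
noncomputable def sstep3 (Δ₀ : Set Formula) (S : List Formula) (D : Formula) : List Formula :=
  if D ∈ Δ₀ then D :: S else S

noncomputable def sstep (Γ Δ₀ : Set Formula) (S : List Formula) (D : Formula) : List Formula :=
  sstep3 Δ₀ (sstep2 Γ (sstep1 Γ Δ₀ S D) D) D

theorem sstep1_sub (Γ Δ₀ : Set Formula) (S : List Formula) (D : Formula) :
    ∀ B ∈ S, B ∈ sstep1 Γ Δ₀ S D := by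
  cases D <;> simp only [sstep1] <;> try exact fun _ h => h
  split_ifs <;> first | exact fun _ h => List.mem_cons_of_mem _ h | exact fun _ h => h

theorem sstep2_sub (Γ : Set Formula) (S : List Formula) (D : Formula) :
    ∀ B ∈ S, B ∈ sstep2 Γ S D := by
  simp only [sstep2]
  split_ifs <;> first | exact fun _ h => List.mem_cons_of_mem _ h | exact fun _ h => h

theorem sstep3_sub (Δ₀ : Set Formula) (S : List Formula) (D : Formula) :
    ∀ B ∈ S, B ∈ sstep3 Δ₀ S D := by
  simp only [sstep3]
  split_ifs <;> first | exact fun _ h => List.mem_cons_of_mem _ h | exact fun _ h => h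

theorem sstep_sub (Γ Δ₀ : Set Formula) (S : List Formula) (D : Formula) :
    ∀ B ∈ S, B ∈ sstep Γ Δ₀ S D := fun B hB =>
  sstep3_sub _ _ _ _ (sstep2_sub _ _ _ _ (sstep1_sub _ _ _ _ _ hB))

theorem sstep1_inv {Γ Δ₀ : Set Formula} (hΓ : IsPrime Γ)
    (hΔ₀ : ∀ {A}, Prov Δ₀ A → A ∈ Δ₀) {S : List Formula} (hS : SInv Γ Δ₀ S)
    (D : Formula) : SInv Γ Δ₀ (sstep1 Γ Δ₀ S D) := by
  cases D <;> simp only [sstep1] <;> try exact hS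
  case or C C' =>
    by_cases h1 : IS4 ((conj S).imp (C.or C'))
    · rw [if_pos h1]
      by_cases h2 : SInv Γ Δ₀ (C :: S)
      · rw [if_pos h2]; exact h2
      · rw [if_neg h2]
        intro D' hD'
        rcases not_forall.1 h2 with ⟨D₁, hD₁⟩
        rcases _root_.not_imp.1 hD₁ with ⟨hD₁m, hD₁d⟩
        have hD₂ : D₁.and D' ∈ Δ₀ := hΔ₀ (paI (.ax hD₁m) (.ax hD'))
        have hbase : Formula.dia ((conj S).and (D₁.and D')) ∈ Γ := hS _ hD₂
        rcases hΓ.diaSplit (orSplitConj h1) hbase with hd | hd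
        · exact absurd (hΓ.diaMemMono
            (impI (paI (paL (.ax rfl)) (paL (paR (.ax rfl))))) hd) hD₁d
        · exact hΓ.diaMemMono
            (impI (paI (paL (.ax rfl)) (paR (paR (.ax rfl))))) hd
    · rw [if_neg h1]; exact hS

theorem sstep2_inv {Γ Δ₀ : Set Formula} (hΓ : IsPrime Γ) {S : List Formula}
    (hS : SInv Γ Δ₀ S) (D : Formula) : SInv Γ Δ₀ (sstep2 Γ S D) := by
  simp only [sstep2]
  split_ifs with hb
  · intro D' hD'
    exact hΓ.diaBoxMem rearr1 hb (hS _ hD')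
  · exact hS

theorem sstep3_inv {Γ Δ₀ : Set Formula} (hΓ : IsPrime Γ)
    (hΔ₀ : ∀ {A}, Prov Δ₀ A → A ∈ Δ₀) {S : List Formula} (hS : SInv Γ Δ₀ S)
    (D : Formula) : SInv Γ Δ₀ (sstep3 Δ₀ S D) := by
  simp only [sstep3]
  split_ifs with hb
  · intro D' hD'
    exact hΓ.diaMemMono rearr2 (hS _ (hΔ₀ (paI (.ax hb) (.ax hD'))))
  · exact hS

theorem sstep_inv {Γ Δ₀ : Set Formula} (hΓ : IsPrime Γ)
    (hΔ₀ : ∀ {A}, Prov Δ₀ A → A ∈ Δ₀) {S : List Formula} (hS : SInv Γ Δ₀ S)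
    (D : Formula) : SInv Γ Δ₀ (sstep Γ Δ₀ S D) :=
  sstep3_inv hΓ hΔ₀ (sstep2_inv hΓ (sstep1_inv hΓ hΔ₀ hS D) D) D

theorem sstep1_or {Γ Δ₀ : Set Formula} {S : List Formula} {C C' : Formula}
    (h : IS4 ((conj S).imp (C.or C'))) :
    C ∈ sstep1 Γ Δ₀ S (C.or C') ∨ C' ∈ sstep1 Γ Δ₀ S (C.or C') := by
  simp only [sstep1, if_pos h]
  split_ifs
  · exact Or.inl (List.mem_cons_self)
  · exact Or.inr (List.mem_cons_self)

/-- The master saturation lemma. -/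
theorem saturate {Γ Δ₀ : Set Formula} {S₀ : List Formula} (hΓ : IsPrime Γ)
    (hΔ₀ : ∀ {A}, Prov Δ₀ A → A ∈ Δ₀)
    (hinv0 : SInv Γ Δ₀ S₀) :
    ∃ Δ, IsPrime Δ ∧ (∀ B ∈ S₀, B ∈ Δ) ∧ Δ₀ ⊆ Δ ∧
      (∀ B, Formula.box B ∈ Γ → B ∈ Δ) ∧ (∀ B ∈ Δ, Formula.dia B ∈ Γ) := by
  set c : ℕ → List Formula := chain (sstep Γ Δ₀) S₀ with hc
  have hmono : ∀ n, ∀ B ∈ c n, B ∈ c (n + 1) := fun n => sstep_sub Γ Δ₀ (c n) (en n)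
  have hinv : ∀ n, SInv Γ Δ₀ (c n) := by
    intro n; induction n with
    | zero => exact hinv0
    | succ n ih => exact sstep_inv hΓ hΔ₀ ih (en n)
  have htop : Top ∈ Δ₀ := hΔ₀ (.thm topI)
  refine ⟨ThL c, ⟨?_, ?_, ?_⟩, ?_, ?_, ?_, ?_⟩
  · exact fun hA => ThL_spec hmono hA
  · rintro ⟨n, hn⟩
    have : Formula.dia Formula.bot ∈ Γ :=
      hΓ.diaMemMono (impTrans (IS4.ipc4 _ _) hn) (hinv n _ htop)
    exact hΓ.cons (hΓ.closed (.mp (.thm IS4.k5) (.ax this)))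
  · rintro A B ⟨n, hn⟩
    obtain ⟨m, hm, hem⟩ := en_ge (A.or B) n
    have hcond : IS4 ((conj (c m)).imp (A.or B)) :=
      impTrans (conjMono (cmonoL hmono hm)) hn
    rcases sstep1_or (Γ := Γ) (Δ₀ := Δ₀) hcond with hmem | hmem
    · refine Or.inl ⟨m + 1, conjMem ?_⟩
      show A ∈ sstep Γ Δ₀ (c m) (en m)
      rw [hem]
      exact sstep3_sub _ _ _ _ (sstep2_sub _ _ _ _ hmem)
    · refine Or.inr ⟨m + 1, conjMem ?_⟩
      show B ∈ sstep Γ Δ₀ (c m) (en m)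
      rw [hem]
      exact sstep3_sub _ _ _ _ (sstep2_sub _ _ _ _ hmem)
  · exact fun B hB => ⟨0, conjMem hB⟩
  · intro D hD
    obtain ⟨m, hm, hem⟩ := en_ge D 0
    refine ⟨m + 1, conjMem ?_⟩
    show D ∈ sstep Γ Δ₀ (c m) (en m)
    rw [hem]
    show D ∈ sstep3 Δ₀ _ D
    simp only [sstep3, if_pos hD]
    exact List.mem_cons_self
  · intro B hB
    obtain ⟨m, hm, hem⟩ := en_ge B 0
    refine ⟨m + 1, conjMem ?_⟩
    show B ∈ sstep Γ Δ₀ (c m) (en m)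
    rw [hem]
    apply sstep3_sub
    show B ∈ sstep2 Γ _ B
    simp only [sstep2, if_pos hB]
    exact List.mem_cons_self
  · rintro B ⟨n, hn⟩
    exact hΓ.diaMemMono (impTrans (IS4.ipc4 _ _) hn) (hinv n _ htop)

end IMLAux
namespace IMLAux

/-- Invariant for the construction for frame condition (F1). -/
def FInv (Δ' X : Set Formula) : Prop :=
  ∀ D ∈ Δ', ∀ B : Formula, Prov (insert (Formula.dia D) X) (Formula.box B) → B ∈ Δ'

open Classical in
noncomputable def fstep1 (Δ' X : Set Formula) : Formula → Set Formula
  | Formula.or C C' =>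
    if Prov X (C.or C') then
      (if FInv Δ' (insert C X) then insert C X else insert C' X)
    else X
  | _ => X

open Classical in
noncomputable def fstep2 (Δ' X : Set Formula) (D : Formula) : Set Formula :=
  if D ∈ Δ' then insert (Formula.dia D) X else X

noncomputable def fstep (Δ' X : Set Formula) (D : Formula) : Set Formula :=
  fstep2 Δ' (fstep1 Δ' X D) D

theorem fstep1_sub (Δ' X : Set Formula) (D : Formula) : X ⊆ fstep1 Δ' X D := by
  cases D <;> simp only [fstep1] <;> try exact fun _ h => h
  split_ifs <;> first | exact Set.subset_insert _ _ | exact fun _ h => h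

theorem fstep2_sub (Δ' X : Set Formula) (D : Formula) : X ⊆ fstep2 Δ' X D := by
  simp only [fstep2]
  split_ifs <;> first | exact Set.subset_insert _ _ | exact fun _ h => h

theorem fstep_sub (Δ' X : Set Formula) (D : Formula) : X ⊆ fstep Δ' X D :=
  fun B hB => fstep2_sub _ _ _ (fstep1_sub _ _ _ hB)

theorem fstep2_inv {Δ' X : Set Formula} (hΔ' : IsPrime Δ') (hX : FInv Δ' X)
    (D : Formula) : FInv Δ' (fstep2 Δ' X D) := by
  simp only [fstep2]
  split_ifs with hD₀
  · intro D₁ hD₁ B h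
    have hD₂ : D₁.and D ∈ Δ' := hΔ'.closed (paI (.ax hD₁) (.ax hD₀))
    refine hX _ hD₂ B (h.cut ?_)
    rintro E (rfl | rfl | hE)
    · exact .mp (.thm (diaMono (IS4.ipc4 _ _))) pax0
    · exact .mp (.thm (diaMono (IS4.ipc5 _ _))) pax0
    · exact .ax (Set.mem_insert_of_mem _ hE)
  · exact hX

theorem fstep1_inv {Δ' X : Set Formula} (hΔ' : IsPrime Δ') (hX : FInv Δ' X)
    (D : Formula) : FInv Δ' (fstep1 Δ' X D) := by
  cases D <;> simp only [fstep1] <;> try exact hX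
  case or C C' =>
    by_cases h1 : Prov X (C.or C')
    · rw [if_pos h1]
      by_cases h2 : FInv Δ' (insert C X)
      · rw [if_pos h2]; exact h2
      · rw [if_neg h2]
        intro D hD B h
        by_contra hB
        simp only [FInv, not_forall] at h2
        obtain ⟨D₁, hD₁, B₁, hprov₁, hB₁⟩ := h2
        have hD₂ : D₁.and D ∈ Δ' := hΔ'.closed (paI (.ax hD₁) (.ax hD))
        have ha : Prov (insert C (insert (Formula.dia (D₁.and D)) X)) (Formula.box B₁) := by
          refine hprov₁.cut ?_
          rintro E (rfl | rfl | hE)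
          · exact .mp (.thm (diaMono (IS4.ipc4 _ _)))
              (.ax (Set.mem_insert_of_mem _ (Set.mem_insert _ _)))
          · exact pax0
          · exact .ax (Set.mem_insert_of_mem _ (Set.mem_insert_of_mem _ hE))
        have hb : Prov (insert C' (insert (Formula.dia (D₁.and D)) X)) (Formula.box B) := by
          refine h.cut ?_
          rintro E (rfl | rfl | hE)
          · exact .mp (.thm (diaMono (IS4.ipc5 _ _)))
              (.ax (Set.mem_insert_of_mem _ (Set.mem_insert _ _)))
          · exact pax0
          · exact .ax (Set.mem_insert_of_mem _ (Set.mem_insert_of_mem _ hE))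
        have ha' := (Prov.thm (boxMono (IS4.ipc6 B₁ B))).mp ha
        have hb' := (Prov.thm (boxMono (IS4.ipc7 B₁ B))).mp hb
        have horelim : Prov (insert (Formula.dia (D₁.and D)) X) (Formula.box (B₁.or B)) :=
          orElim (pw h1) ha' hb'
        rcases hΔ'.prime (hX _ hD₂ _ horelim) with hc | hc
        · exact hB₁ hc
        · exact hB hc
    · rw [if_neg h1]; exact hX

theorem fstep_inv {Δ' X : Set Formula} (hΔ' : IsPrime Δ') (hX : FInv Δ' X)
    (D : Formula) : FInv Δ' (fstep Δ' X D) :=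
  fstep2_inv hΔ' (fstep1_inv hΔ' hX D) D

theorem fstep1_or {Δ' X : Set Formula} {C C' : Formula} (h : Prov X (C.or C')) :
    C ∈ fstep1 Δ' X (C.or C') ∨ C' ∈ fstep1 Δ' X (C.or C') := by
  simp only [fstep1, if_pos h]
  split_ifs
  · exact Or.inl (Set.mem_insert _ _)
  · exact Or.inr (Set.mem_insert _ _)

/-- The construction for frame condition (F1). -/
theorem extendF1 {Γ Δ' : Set Formula} (hΔ' : IsPrime Δ') (hinv0 : FInv Δ' Γ) :
    ∃ Θ, IsPrime Θ ∧ Γ ⊆ Θ ∧ (∀ B, Formula.box B ∈ Θ → B ∈ Δ') ∧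
      (∀ D ∈ Δ', Formula.dia D ∈ Θ) := by
  set c : ℕ → Set Formula := chain (fstep Δ') Γ with hc
  have hmono : ∀ n, c n ⊆ c (n + 1) := fun n => fstep_sub Δ' (c n) (en n)
  have hinv : ∀ n, FInv Δ' (c n) := by
    intro n; induction n with
    | zero => exact hinv0
    | succ n ih => exact fstep_inv hΔ' ih (en n)
  have htop : Top ∈ Δ' := hΔ'.closed (.thm topI)
  refine ⟨Th c, ⟨?_, ?_, ?_⟩, ?_, ?_, ?_⟩
  · exact fun hA => Th_spec hmono hA
  · rintro ⟨n, hn⟩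
    exact hΔ'.cons (hinv n _ htop Formula.bot
      (pw ((Prov.thm (IS4.ipc9 _)).mp hn)))
  · rintro A B ⟨n, hn⟩
    obtain ⟨m, hm, hem⟩ := en_ge (A.or B) n
    have hprov : Prov (c m) (A.or B) := hn.mono (cmono hmono hm)
    rcases fstep1_or (Δ' := Δ') hprov with hmem | hmem
    · refine Or.inl ⟨m + 1, .ax ?_⟩
      show A ∈ fstep Δ' (c m) (en m)
      rw [hem]
      exact fstep2_sub _ _ _ hmem
    · refine Or.inr ⟨m + 1, .ax ?_⟩
      show B ∈ fstep Δ' (c m) (en m)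
      rw [hem]
      exact fstep2_sub _ _ _ hmem
  · exact fun A hA => ⟨0, .ax hA⟩
  · rintro B ⟨n, hn⟩
    exact hinv n _ htop B (pw hn)
  · intro D hD
    obtain ⟨m, hm, hem⟩ := en_ge D 0
    refine ⟨m + 1, .ax ?_⟩
    show Formula.dia D ∈ fstep Δ' (c m) (en m)
    rw [hem]
    show Formula.dia D ∈ fstep2 Δ' _ D
    simp only [fstep2, if_pos hD]
    exact Set.mem_insert _ _

end IMLAux
namespace IMLAux

theorem boxMP2 {P Q R : Formula} (hp : IS4 (P.imp (Q.imp R))) :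
    IS4 ((Formula.box P).imp ((Formula.box Q).imp (Formula.box R))) :=
  impTrans ((IS4.k1 _ _).mp hp.nec) (IS4.k1 Q R)

theorem orImpLemma {C C' σ A : Formula} (hd : IS4 (σ.imp (C.or C'))) :
    IS4 ((((C.and σ).imp A)).imp ((((C'.and σ).imp A)).imp (σ.imp A))) := by
  apply IS4_of_prov
  refine Prov.ded (Prov.ded (Prov.ded ?_))
  refine orElim (.mp (.thm hd) pax0) ?_ ?_
  · have hx : Prov (insert C (insert σ (insert ((C'.and σ).imp A)
        (insert ((C.and σ).imp A) (∅ : Set Formula))))) ((C.and σ).imp A) := .ax (by simp)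
    exact .mp hx (paI pax0 (pw pax0))
  · have hx : Prov (insert C' (insert σ (insert ((C'.and σ).imp A)
        (insert ((C.and σ).imp A) (∅ : Set Formula))))) ((C'.and σ).imp A) := .ax (by simp)
    exact .mp hx (paI pax0 (pw pax0))

theorem absorbLemma {D σ A : Formula} :
    IS4 (D.imp ((((D.and σ).imp A)).imp (σ.imp A))) := by
  apply IS4_of_prov
  refine Prov.ded (Prov.ded (Prov.ded ?_))
  have hx : Prov (insert σ (insert ((D.and σ).imp A)
      (insert D (∅ : Set Formula)))) ((D.and σ).imp A) := .ax (by simp)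
  have hD : Prov (insert σ (insert ((D.and σ).imp A)
      (insert D (∅ : Set Formula)))) D := .ax (by simp)
  exact .mp hx (paI hD pax0)

theorem contractionI {σ A : Formula} : IS4 ((σ.imp (σ.imp A)).imp (σ.imp A)) := by
  apply IS4_of_prov
  refine Prov.ded (Prov.ded ?_)
  have hx : Prov (insert σ (insert (σ.imp (σ.imp A)) (∅ : Set Formula)))
      (σ.imp (σ.imp A)) := .ax (by simp)
  exact .mp (.mp hx pax0) pax0

/-- Invariant for the construction used in the `box` case of the truth lemma. -/
def BInv (A : Formula) (p : Set Formula × List Formula) : Prop :=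
  ¬ Prov p.1 (Formula.box ((conj p.2).imp A))

open Classical in
noncomputable def bstep1 (A : Formula) (p : Set Formula × List Formula) :
    Formula → Set Formula × List Formula
  | Formula.or C C' =>
    if Prov p.1 (C.or C') then
      (if BInv A (insert C p.1, p.2) then (insert C p.1, p.2) else (insert C' p.1, p.2))
    else p
  | _ => p

open Classical in
noncomputable def bstep2 (A : Formula) (p : Set Formula × List Formula) :
    Formula → Set Formula × List Formula
  | Formula.or C C' =>
    if IS4 ((conj p.2).imp (C.or C')) then
      (if BInv A (p.1, C :: p.2) then (p.1, C :: p.2) else (p.1, C' :: p.2))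
    else p
  | _ => p

open Classical in
noncomputable def bstep3 (p : Set Formula × List Formula) (D : Formula) :
    Set Formula × List Formula :=
  if Prov p.1 (Formula.box D) then (p.1, D :: p.2) else p

noncomputable def bstep4 (p : Set Formula × List Formula) : Set Formula × List Formula :=
  (insert (Formula.dia (conj p.2)) p.1, p.2)

noncomputable def bstep (A : Formula) (p : Set Formula × List Formula) (D : Formula) :
    Set Formula × List Formula :=
  bstep4 (bstep3 (bstep2 A (bstep1 A p D) D) D)

theorem bstep1_fst (A : Formula) (p : Set Formula × List Formula) (D : Formula) :
    p.1 ⊆ (bstep1 A p D).1 := by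
  cases D <;> simp only [bstep1] <;> try exact fun _ h => h
  split_ifs <;> first | exact Set.subset_insert _ _ | exact fun _ h => h

theorem bstep1_snd (A : Formula) (p : Set Formula × List Formula) (D : Formula) :
    (bstep1 A p D).2 = p.2 := by
  cases D <;> simp only [bstep1] <;> try rfl
  split_ifs <;> rfl

theorem bstep2_fst (A : Formula) (p : Set Formula × List Formula) (D : Formula) :
    (bstep2 A p D).1 = p.1 := by
  cases D <;> simp only [bstep2] <;> try rfl
  split_ifs <;> rfl

theorem bstep2_snd (A : Formula) (p : Set Formula × List Formula) (D : Formula) :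
    ∀ B ∈ p.2, B ∈ (bstep2 A p D).2 := by
  cases D <;> simp only [bstep2] <;> try exact fun _ h => h
  split_ifs <;> first | exact fun _ h => List.mem_cons_of_mem _ h | exact fun _ h => h

theorem bstep3_fst (p : Set Formula × List Formula) (D : Formula) :
    (bstep3 p D).1 = p.1 := by
  simp only [bstep3]; split_ifs <;> rfl

theorem bstep3_snd (p : Set Formula × List Formula) (D : Formula) :
    ∀ B ∈ p.2, B ∈ (bstep3 p D).2 := by
  simp only [bstep3]
  split_ifs <;> first | exact fun _ h => List.mem_cons_of_mem _ h | exact fun _ h => h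

theorem bstep_fst (A : Formula) (p : Set Formula × List Formula) (D : Formula) :
    p.1 ⊆ (bstep A p D).1 := by
  intro B hB
  apply Set.subset_insert _ _
  rw [bstep3_fst, bstep2_fst]
  exact bstep1_fst A p D hB

theorem bstep_snd (A : Formula) (p : Set Formula × List Formula) (D : Formula) :
    ∀ B ∈ p.2, B ∈ (bstep A p D).2 := by
  intro B hB
  show B ∈ (bstep3 _ _).2
  apply bstep3_snd
  apply bstep2_snd
  rw [bstep1_snd]
  exact hB

theorem bstep1_inv {A : Formula} {p : Set Formula × List Formula} (h : BInv A p)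
    (D : Formula) : BInv A (bstep1 A p D) := by
  cases D <;> simp only [bstep1] <;> try exact h
  case or C C' =>
    by_cases h1 : Prov p.1 (C.or C')
    · rw [if_pos h1]
      by_cases h2 : BInv A (insert C p.1, p.2)
      · rw [if_pos h2]; exact h2
      · rw [if_neg h2]
        intro h3
        exact h (orElim h1 (not_not.1 h2) h3)
    · rw [if_neg h1]; exact h

theorem bstep2_inv {A : Formula} {p : Set Formula × List Formula} (h : BInv A p)
    (D : Formula) : BInv A (bstep2 A p D) := by
  cases D <;> simp only [bstep2] <;> try exact h
  case or C C' =>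
    by_cases h1 : IS4 ((conj p.2).imp (C.or C'))
    · rw [if_pos h1]
      by_cases h2 : BInv A (p.1, C :: p.2)
      · rw [if_pos h2]; exact h2
      · rw [if_neg h2]
        intro h3
        have h2' : Prov p.1 (Formula.box ((conj (C :: p.2)).imp A)) := not_not.1 h2
        exact h (.mp (.mp (.thm (boxMP2 (orImpLemma h1))) h2') h3)
    · rw [if_neg h1]; exact h

theorem bstep3_inv {A : Formula} {p : Set Formula × List Formula} (h : BInv A p)
    (D : Formula) : BInv A (bstep3 p D) := by
  simp only [bstep3]
  split_ifs with hb
  · intro h3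
    exact h (.mp (.mp (.thm (boxMP2 absorbLemma)) hb) h3)
  · exact h

theorem bstep4_inv {A : Formula} {p : Set Formula × List Formula} (h : BInv A p) :
    BInv A (bstep4 p) := by
  intro h3
  have h4 : Prov p.1 ((Formula.dia (conj p.2)).imp
      (Formula.box ((conj p.2).imp A))) := h3.ded
  have h5 : Prov p.1 (Formula.box ((conj p.2).imp ((conj p.2).imp A))) :=
    .mp (.thm (IS4.k4 (conj p.2) ((conj p.2).imp A))) h4
  exact h (.mp (.thm (boxMono contractionI)) h5)

theorem bstep_inv {A : Formula} {p : Set Formula × List Formula} (h : BInv A p)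
    (D : Formula) : BInv A (bstep A p D) :=
  bstep4_inv (bstep3_inv (bstep2_inv (bstep1_inv h D) D) D)

theorem bstep1_or {A : Formula} {p : Set Formula × List Formula} {C C' : Formula}
    (h : Prov p.1 (C.or C')) :
    C ∈ (bstep1 A p (C.or C')).1 ∨ C' ∈ (bstep1 A p (C.or C')).1 := by
  simp only [bstep1, if_pos h]
  split_ifs
  · exact Or.inl (Set.mem_insert _ _)
  · exact Or.inr (Set.mem_insert _ _)

theorem bstep2_or {A : Formula} {p : Set Formula × List Formula} {C C' : Formula}
    (h : IS4 ((conj p.2).imp (C.or C'))) :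
    C ∈ (bstep2 A p (C.or C')).2 ∨ C' ∈ (bstep2 A p (C.or C')).2 := by
  simp only [bstep2, if_pos h]
  split_ifs
  · exact Or.inl (List.mem_cons_self)
  · exact Or.inr (List.mem_cons_self)

theorem binv_init {Γ : Set Formula} {A : Formula} (hΓ : IsPrime Γ)
    (hA : Formula.box A ∉ Γ) : BInv A (Γ, ([] : List Formula)) := by
  intro hcon
  simp only [conj] at hcon
  exact hA (hΓ.closed (.mp (.thm (boxMono (impI (.mp (.ax rfl) (.thm topI))))) hcon))

/-- The key construction for the `box` case of the truth lemma. -/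
theorem boxLemma {Γ : Set Formula} {A : Formula} (hΓ : IsPrime Γ)
    (hA : Formula.box A ∉ Γ) :
    ∃ Γ' Δ, IsPrime Γ' ∧ IsPrime Δ ∧ Γ ⊆ Γ' ∧
      (∀ B, Formula.box B ∈ Γ' → B ∈ Δ) ∧ (∀ B ∈ Δ, Formula.dia B ∈ Γ') ∧ A ∉ Δ := by
  set c : ℕ → Set Formula × List Formula := chain (bstep A) (Γ, []) with hc
  have hm1 : ∀ n, (c n).1 ⊆ (c (n + 1)).1 := fun n => bstep_fst A (c n) (en n)
  have hm2 : ∀ n, ∀ B ∈ (c n).2, B ∈ (c (n + 1)).2 := fun n => bstep_snd A (c n) (en n)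
  have hinv : ∀ n, BInv A (c n) := by
    intro n; induction n with
    | zero =>
      rw [hc]
      exact binv_init hΓ hA
    | succ n ih => exact bstep_inv ih (en n)
  have hdia : ∀ n, Formula.dia (conj (c (n + 1)).2) ∈ (c (n + 1)).1 := by
    intro n
    show Formula.dia (conj (bstep4 _).2) ∈ (bstep4 _).1
    exact Set.mem_insert _ _
  refine ⟨Th (fun n => (c n).1), ThL (fun n => (c n).2), ⟨?_, ?_, ?_⟩, ⟨?_, ?_, ?_⟩,
    ?_, ?_, ?_, ?_⟩
  · exact fun hB => Th_spec hm1 hB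
  · rintro ⟨n, hn⟩
    exact hinv n ((Prov.thm (IS4.ipc9 _)).mp hn)
  · rintro B B' ⟨n, hn⟩
    obtain ⟨m, hm, hem⟩ := en_ge (B.or B') n
    have hprov : Prov (c m).1 (B.or B') := hn.mono (cmono hm1 hm)
    rcases bstep1_or (A := A) hprov with hmem | hmem
    · refine Or.inl ⟨m + 1, .ax ?_⟩
      show B ∈ (bstep A (c m) (en m)).1
      rw [hem]
      apply Set.subset_insert
      rw [bstep3_fst, bstep2_fst]
      exact hmem
    · refine Or.inr ⟨m + 1, .ax ?_⟩
      show B' ∈ (bstep A (c m) (en m)).1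
      rw [hem]
      apply Set.subset_insert
      rw [bstep3_fst, bstep2_fst]
      exact hmem
  · exact fun hB => ThL_spec hm2 hB
  · rintro ⟨n, hn⟩
    exact hinv n (.thm (IS4.nec (impTrans hn (IS4.ipc9 A))))
  · rintro B B' ⟨n, hn⟩
    obtain ⟨m, hm, hem⟩ := en_ge (B.or B') n
    have hcond : IS4 ((conj (bstep1 A (c m) (en m)).2).imp (B.or B')) := by
      rw [bstep1_snd]
      exact impTrans (conjMono (cmonoL hm2 hm)) hn
    rcases bstep2_or (A := A) hcond with hmem | hmem
    · refine Or.inl ⟨m + 1, conjMem ?_⟩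
      show B ∈ (bstep A (c m) (en m)).2
      rw [hem]
      show B ∈ (bstep3 _ _).2
      exact bstep3_snd _ _ _ (by rw [hem] at hmem; exact hmem)
    · refine Or.inr ⟨m + 1, conjMem ?_⟩
      show B' ∈ (bstep A (c m) (en m)).2
      rw [hem]
      show B' ∈ (bstep3 _ _).2
      exact bstep3_snd _ _ _ (by rw [hem] at hmem; exact hmem)
  · exact fun B hB => ⟨0, .ax hB⟩
  · rintro B ⟨n, hn⟩
    obtain ⟨m, hm, hem⟩ := en_ge B n
    refine ⟨m + 1, conjMem ?_⟩
    show B ∈ (bstep A (c m) (en m)).2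
    rw [hem]
    show B ∈ (bstep3 _ _).2
    have hprov : Prov (bstep2 A (bstep1 A (c m) B) B).1 (Formula.box B) := by
      rw [bstep2_fst]
      exact hn.mono ((cmono hm1 hm).trans (bstep1_fst A (c m) B))
    simp only [bstep3, if_pos hprov]
    exact List.mem_cons_self
  · rintro B ⟨n, hn⟩
    have himp : IS4 ((conj (c (n + 1)).2).imp B) :=
      impTrans (conjMono (cmonoL hm2 (Nat.le_succ n))) hn
    exact ⟨n + 1, .mp (.thm (diaMono himp)) (.ax (hdia n))⟩
  · rintro ⟨n, hn⟩
    exact hinv n (.thm (IS4.nec hn))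
end IMLAux
namespace IMLAux

theorem force_mono {M : BModel} {w w' : M.W} (h : M.le w w') {A : Formula}
    (hf : M.force w A) : M.force w' A := by
  induction A generalizing w w' with
  | bot => exact hf
  | atom a => exact M.mono w w' h a hf
  | and A B ihA ihB => exact ⟨ihA h hf.1, ihB h hf.2⟩
  | or A B ihA ihB =>
    rcases hf with hf | hf
    · exact Or.inl (ihA h hf)
    · exact Or.inr (ihB h hf)
  | imp A B ihA ihB =>
    intro u hu hA
    exact hf u (M.le_trans _ _ _ h hu) hA
  | box A ih =>
    intro x u hx hr
    exact hf x u (M.le_trans _ _ _ h hx) hr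
  | dia A ih =>
    obtain ⟨u, hr, hu⟩ := hf
    obtain ⟨u', hr', hu'⟩ := M.F2 w u w' h hr
    exact ⟨u', hr', ih hu' hu⟩

theorem soundness {A : Formula} (h : IS4 A) (M : BModel) (hrefl : Reflexive M.rel)
    (htrans : Transitive M.rel) : ∀ w : M.W, M.force w A := by
  induction h with
  | @mp A B h1 h2 ih1 ih2 =>
    intro w
    exact ih1 w w (M.le_refl w) (ih2 w)
  | nec h ih => exact fun w x u _ _ => ih u
  | ipc1 A B => exact fun w x _ hA y hxy _ => force_mono hxy hA
  | ipc2 A B C =>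
    intro w x _ h1 y hxy h2 z hyz h3
    exact h1 z (M.le_trans _ _ _ hxy hyz) h3 z (M.le_refl z) (h2 z hyz h3)
  | ipc3 A B =>
    intro w x _ hA y hxy hB
    exact ⟨force_mono hxy hA, hB⟩
  | ipc4 A B => exact fun w x _ h => h.1
  | ipc5 A B => exact fun w x _ h => h.2
  | ipc6 A B => exact fun w x _ h => Or.inl h
  | ipc7 A B => exact fun w x _ h => Or.inr h
  | ipc8 A B C =>
    intro w x _ h1 y hxy h2 z hyz h3
    rcases h3 with h3 | h3
    · exact h1 z (M.le_trans _ _ _ hxy hyz) h3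
    · exact h2 z hyz h3
  | ipc9 A => exact fun w x _ h => h.elim
  | k1 A B =>
    intro w x _ h1 y hxy h2 z u hyz hru
    exact h1 z u (M.le_trans _ _ _ hxy hyz) hru u (M.le_refl u) (h2 z u hyz hru)
  | k2 A B =>
    intro w x _ h1 y hxy h2
    obtain ⟨u, hru, hA⟩ := h2
    exact ⟨u, hru, h1 y u hxy hru u (M.le_refl u) hA⟩
  | k3 A B =>
    intro w x _ h
    obtain ⟨u, hru, hAB⟩ := h
    rcases hAB with hA | hA
    · exact Or.inl ⟨u, hru, hA⟩
    · exact Or.inr ⟨u, hru, hA⟩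
  | k4 A B =>
    intro w x hwx h1 y u hxy hryu u' huu' hA
    obtain ⟨v, hyv, hrv⟩ := M.F1 y u u' hryu huu'
    exact h1 v (M.le_trans _ _ _ hxy hyv) ⟨u', hrv, hA⟩ v u' (M.le_refl v) hrv
  | k5 =>
    intro w x _ h
    obtain ⟨u, _, hbot⟩ := h
    exact hbot.elim
  | ax4 A =>
    intro w
    refine ⟨?_, ?_⟩
    · intro x _ h
      obtain ⟨u, hru, v, hrv, hv⟩ := h
      exact ⟨v, htrans hru hrv, hv⟩
    · intro x hwx h1 y z hxy hryz z' u hzz' hru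
      obtain ⟨v, hyv, hrv⟩ := M.F1 y z z' hryz hzz'
      exact h1 v u (M.le_trans _ _ _ hxy hyv) (htrans hrv hru)
  | axt A =>
    intro w
    refine ⟨?_, ?_⟩
    · exact fun x _ h => ⟨x, hrefl x, h⟩
    · exact fun x _ h => h x x (M.le_refl x) (hrefl x)

def trivModel : BModel where
  W := PUnit
  nonempty := ⟨⟨⟩⟩
  le _ _ := True
  rel _ _ := True
  le_refl _ := trivial
  le_trans _ _ _ _ _ := trivial
  F1 _ _ z _ _ := ⟨z, trivial, trivial⟩
  F2 _ y _ _ _ := ⟨y, trivial, trivial⟩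
  val _ _ := True
  mono _ _ _ _ h := h

theorem is4_consistent : ¬ IS4 Formula.bot := fun h =>
  soundness h trivModel (fun _ => trivial) (fun _ _ _ _ _ => trivial) ⟨⟩

end IMLAux
namespace IMLAux

theorem axTbox {A : Formula} : IS4 ((Formula.box A).imp A) :=
  (IS4.ipc5 _ _).mp (IS4.axt A)
theorem axTdia {A : Formula} : IS4 (A.imp (Formula.dia A)) :=
  (IS4.ipc4 _ _).mp (IS4.axt A)
theorem ax4dia {A : Formula} : IS4 ((Formula.dia (Formula.dia A)).imp (Formula.dia A)) :=
  (IS4.ipc4 _ _).mp (IS4.ax4 A)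
theorem ax4box {A : Formula} : IS4 ((Formula.box A).imp (Formula.box (Formula.box A))) :=
  (IS4.ipc5 _ _).mp (IS4.ax4 A)

/-- The worlds of the canonical model: prime theories. -/
def PT : Type := {Γ : Set Formula // IsPrime Γ}

def ple (x y : PT) : Prop := x.1 ⊆ y.1

def prel (x y : PT) : Prop :=
  (∀ B, Formula.box B ∈ x.1 → B ∈ y.1) ∧ (∀ B ∈ y.1, Formula.dia B ∈ x.1)

theorem prel_refl : Reflexive prel := fun x =>
  ⟨fun B hB => x.2.closed (.mp (.thm axTbox) (.ax hB)),
   fun B hB => x.2.closed (.mp (.thm axTdia) (.ax hB))⟩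

theorem prel_trans : Transitive prel := fun x y z h1 h2 =>
  ⟨fun B hB => h2.1 B (h1.1 (Formula.box B) (x.2.closed (.mp (.thm ax4box) (.ax hB)))),
   fun B hB => x.2.closed (.mp (.thm ax4dia) (.ax (h1.2 _ (h2.2 B hB))))⟩

theorem exists_prime : ∃ Γ : Set Formula, IsPrime Γ := by
  obtain ⟨Δ, hp, -, -⟩ :=
    lindenbaum (Γ := ∅) (G := Formula.bot) (fun h => is4_consistent (IS4_of_prov h))
  exact ⟨Δ, hp⟩

theorem canonF1 (x y z : PT) (hr : prel x y) (hle : ple y z) :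
    ∃ u : PT, ple x u ∧ prel u z := by
  have hinv0 : FInv z.1 x.1 := by
    intro D hD B h
    have h1 : Formula.box (D.imp B) ∈ x.1 := x.2.closed (.mp (.thm (IS4.k4 D B)) h.ded)
    exact z.2.closed (.mp (.ax (hle (hr.1 _ h1))) (.ax hD))
  obtain ⟨Θ, hp, hsub, hbox, hdia⟩ := extendF1 z.2 hinv0
  exact ⟨⟨Θ, hp⟩, hsub, hbox, hdia⟩

theorem canonF2 (x y z : PT) (hle : ple x z) (hr : prel x y) :
    ∃ u : PT, prel z u ∧ ple y u := by
  have hΔ₀ : ∀ {A : Formula}, Prov y.1 A → A ∈ y.1 := fun h => y.2.closed h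
  have hinv0 : SInv z.1 y.1 [] := by
    intro D hD
    simp only [conj]
    exact z.2.diaMemMono (impAnd ((IS4.ipc1 Top D).mp topI) (IS4.idI D)) (hle (hr.2 D hD))
  obtain ⟨Δ, hp, -, hsub, hbox, hdia⟩ := saturate z.2 hΔ₀ hinv0
  exact ⟨⟨Δ, hp⟩, ⟨hbox, hdia⟩, fun B hB => hsub hB⟩

/-- The canonical birelational model. -/
noncomputable def canon : BModel where
  W := PT
  nonempty := ⟨⟨exists_prime.choose, exists_prime.choose_spec⟩⟩
  le := ple
  rel := prel
  le_refl w := Set.Subset.refl _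
  le_trans u v w h1 h2 := h1.trans h2
  F1 := canonF1
  F2 := canonF2
  val Γ a := Formula.atom a ∈ Γ.1
  mono w w' h a ha := h ha

theorem boxConjProv {Γ : Set Formula} {L : List Formula}
    (h : ∀ B ∈ L, Formula.box B ∈ Γ) : Prov Γ (Formula.box (conj L)) := by
  induction L with
  | nil => exact .thm topI.nec
  | cons C L ih =>
    exact .mp (.mp (.thm (boxMP2 (IS4.ipc3 C (conj L)))) (.ax (h _ (List.mem_cons_self))))
      (ih fun B hB => h _ (List.mem_cons_of_mem _ hB))

/-- The truth lemma for the canonical model. -/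
theorem truth : ∀ (A : Formula) (Γ : PT), canon.force Γ A ↔ A ∈ Γ.1 := by
  intro A
  induction A with
  | bot =>
    intro Γ
    simp only [BModel.force]
    exact ⟨False.elim, fun h => Γ.2.cons h⟩
  | atom a => exact fun Γ => Iff.rfl
  | and A B ihA ihB =>
    intro Γ
    simp only [BModel.force, ihA, ihB]
    exact ⟨fun h => Γ.2.closed (paI (.ax h.1) (.ax h.2)),
      fun h => ⟨Γ.2.closed (paL (.ax h)), Γ.2.closed (paR (.ax h))⟩⟩
  | or A B ihA ihB =>
    intro Γ
    simp only [BModel.force, ihA, ihB]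
    exact ⟨fun h => h.elim (fun h1 => Γ.2.closed (poL (.ax h1)))
        (fun h2 => Γ.2.closed (poR (.ax h2))),
      fun h => Γ.2.prime h⟩
  | imp A B ihA ihB =>
    intro Γ
    simp only [BModel.force]
    constructor
    · intro hf
      by_contra hmem
      have hnp : ¬ Prov (insert A Γ.1) B := fun hp => hmem (Γ.2.closed hp.ded)
      obtain ⟨Δ, hp, hsub, hB⟩ := lindenbaum hnp
      have hle : canon.le Γ ⟨Δ, hp⟩ := fun C hC => hsub (Set.mem_insert_of_mem _ hC)
      have hA : canon.force ⟨Δ, hp⟩ A := (ihA _).2 (hsub (Set.mem_insert _ _))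
      exact hB ((ihB _).1 (hf _ hle hA))
    · intro hmem Δ hle hA
      exact (ihB _).2 (Δ.2.closed (.mp (.ax (hle hmem)) (.ax ((ihA _).1 hA))))
  | box A ih =>
    intro Γ
    simp only [BModel.force]
    constructor
    · intro hf
      by_contra hmem
      obtain ⟨Γ', Δ, hpΓ', hpΔ, hsub, hbox, hdia, hA⟩ := boxLemma Γ.2 hmem
      exact hA ((ih _).1 (hf ⟨Γ', hpΓ'⟩ ⟨Δ, hpΔ⟩ hsub ⟨hbox, hdia⟩))
    · intro hmem Γ' u hle hrel
      exact (ih _).2 (hrel.1 A (hle hmem))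
  | dia A ih =>
    intro Γ
    simp only [BModel.force]
    constructor
    · rintro ⟨u, hrel, hu⟩
      exact hrel.2 A ((ih _).1 hu)
    · intro hmem
      have hΔ₀ : ∀ {C : Formula},
          Prov {B | Prov {C | Formula.box C ∈ Γ.1} B} C → C ∈ {B | Prov {C | Formula.box C ∈ Γ.1} B} :=
        fun h => h.cut (fun B hB => hB)
      have hinv0 : SInv Γ.1 {B | Prov {C | Formula.box C ∈ Γ.1} B} [A] := by
        intro D hD
        obtain ⟨L, hL, hLD⟩ := exists_conj hD
        have hboxL : Prov Γ.1 (Formula.box (conj L)) := boxConjProv (fun B hB => hL B hB)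
        have hboxD : Formula.box D ∈ Γ.1 := Γ.2.closed (.mp (.thm (boxMono hLD)) hboxL)
        simp only [conj]
        exact Γ.2.diaBoxMem
          (impI (paI (paI (paR (.ax rfl)) (.thm topI)) (paL (.ax rfl)))) hboxD hmem
      obtain ⟨Δ, hp, hS₀, hsub, hbox, hdia⟩ := saturate Γ.2 hΔ₀ hinv0
      exact ⟨⟨Δ, hp⟩, ⟨hbox, hdia⟩, (ih _).2 (hS₀ A (List.mem_cons_self))⟩

end IMLAux
/-- **Soundness and completeness of IS4 for birelational
semantics.** A formula `A` is a theorem of IS4 iff `A` is valid in every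
birelational frame in which `R` is reflexive and transitive, i.e. iff `A` is
forced at every world under every monotone valuation. -/
theorem is4_soundness_completeness (A : Formula) :
    IS4 A ↔
      ∀ M : BModel, Reflexive M.rel → Transitive M.rel →
        ∀ w : M.W, M.force w A := by
  constructor
  · exact fun h M hr ht w => IMLAux.soundness h M hr ht w
  · intro hval
    by_contra hA
    have hnp : ¬ IMLAux.Prov ∅ A := fun h => hA (IMLAux.IS4_of_prov h)
    obtain ⟨Δ, hp, -, hmem⟩ := IMLAux.lindenbaum hnp
    have hforce := hval IMLAux.canon IMLAux.prel_refl IMLAux.prel_trans ⟨Δ, hp⟩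
    exact hmem ((IMLAux.truth A ⟨Δ, hp⟩).1 hforce)
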